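/- Let μ > 0 and λ > -2μ/3. If f : Ω → R_{0,m} is C³ and satisfies the Lamé-Navier equation ((μ+λ)/2)·D f D + ((3μ+λ)/2)·D D f = 0 on an open set Ω ⊆ R^m, then the function h = M̄ f := ((μ+λ)/2)·D f + ((3μ+λ)/2)·f D is right monogenic on Ω, i.e., h D = 0. -/

import Mathlib

noncomputable section

open CliffordAlgebra

/-- The quadratic form `x ↦ -∑ xᵢ²` on `ℝ^m`, so that `CliffordAlgebra (Qf m)` is the
real Clifford algebra `R_{0,m}` with generators `e i` satisfying
`e i * e j + e j * e i = -2 δ_{ij}`. -/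
def Qf (m : ℕ) : QuadraticForm ℝ (Fin m → ℝ) :=
  QuadraticMap.weightedSumSquares ℝ (fun _ : Fin m => (-1 : ℝ))

/-- The generator `e i` of `R_{0,m}`. -/
def e (m : ℕ) (i : Fin m) : CliffordAlgebra (Qf m) :=
  ι (Qf m) (Pi.single i 1)

variable (m : ℕ) [Module.Finite ℝ (CliffordAlgebra (Qf m))]

/-- A linear identification of the (finite-dimensional) Clifford algebra `R_{0,m}` with a
finite-dimensional coordinate space, used to transport calculus on `ℝ^N` to
`R_{0,m}`-valued functions. -/
def coordEquiv :
    CliffordAlgebra (Qf m) ≃ₗ[ℝ]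
      (Fin (Module.finrank ℝ (CliffordAlgebra (Qf m))) → ℝ) :=
  (Module.finBasis ℝ (CliffordAlgebra (Qf m))).equivFun

/-- The partial derivative `∂f/∂xᵢ` of an `R_{0,m}`-valued function on `ℝ^m`. -/
def pd (f : (Fin m → ℝ) → CliffordAlgebra (Qf m)) (i : Fin m) (x : Fin m → ℝ) :
    CliffordAlgebra (Qf m) :=
  (coordEquiv m).symm (fderiv ℝ (fun y => coordEquiv m (f y)) x (Pi.single i 1))

/-- The left Dirac operator `D f = Σᵢ eᵢ · ∂f/∂xᵢ`. -/
def diracL (f : (Fin m → ℝ) → CliffordAlgebra (Qf m)) (x : Fin m → ℝ) :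
    CliffordAlgebra (Qf m) :=
  ∑ i, e m i * pd m f i x

/-- The right Dirac operator `f D = Σᵢ (∂f/∂xᵢ) · eᵢ`. -/
def diracR (f : (Fin m → ℝ) → CliffordAlgebra (Qf m)) (x : Fin m → ℝ) :
    CliffordAlgebra (Qf m) :=
  ∑ i, pd m f i x * e m i

/-- The componentwise Laplacian `Δ f = Σᵢ ∂²f/∂xᵢ²`. -/
def lap (f : (Fin m → ℝ) → CliffordAlgebra (Qf m)) (x : Fin m → ℝ) :
    CliffordAlgebra (Qf m) :=
  ∑ i, pd m (pd m f i) i x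

/-- `C^n` smoothness of an `R_{0,m}`-valued function, via the coordinate identification. -/
def CliffSmooth (n : ℕ∞) (f : (Fin m → ℝ) → CliffordAlgebra (Qf m)) : Prop :=
  ContDiff ℝ n fun y => coordEquiv m (f y)

/-- The operator `M f = ((μ+λ)/2)·fD + ((3μ+λ)/2)·Df`. -/
def Mop (m : ℕ) [Module.Finite ℝ (CliffordAlgebra (Qf m))] (mu lam : ℝ)
    (f : (Fin m → ℝ) → CliffordAlgebra (Qf m)) (x : Fin m → ℝ) :
    CliffordAlgebra (Qf m) :=
  ((mu + lam) / 2) • diracR m f x + ((3 * mu + lam) / 2) • diracL m f x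

/-- The operator `M̄ f = ((μ+λ)/2)·Df + ((3μ+λ)/2)·fD`. -/
def Mbar (m : ℕ) [Module.Finite ℝ (CliffordAlgebra (Qf m))] (mu lam : ℝ)
    (f : (Fin m → ℝ) → CliffordAlgebra (Qf m)) (x : Fin m → ℝ) :
    CliffordAlgebra (Qf m) :=
  ((mu + lam) / 2) • diracL m f x + ((3 * mu + lam) / 2) • diracR m f x

/-- The Cliffordian Lamé-Navier operator `L f = ((μ+λ)/2)·DfD + ((3μ+λ)/2)·DDf`. -/
def LN (m : ℕ) [Module.Finite ℝ (CliffordAlgebra (Qf m))] (mu lam : ℝ)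
    (f : (Fin m → ℝ) → CliffordAlgebra (Qf m)) (x : Fin m → ℝ) :
    CliffordAlgebra (Qf m) :=
  ((mu + lam) / 2) • diracR m (diracL m f) x +
    ((3 * mu + lam) / 2) • diracL m (diracL m f) x

/-! ### Auxiliary lemmas -/

lemma Qf_apply' (m : ℕ) (v : Fin m → ℝ) : Qf m v = -∑ k, v k * v k := by
  simp [Qf, QuadraticMap.weightedSumSquares_apply]

lemma e_mul_e_add (m : ℕ) (i j : Fin m) :
    e m i * e m j + e m j * e m i
      = algebraMap ℝ (CliffordAlgebra (Qf m)) (if i = j then (-2 : ℝ) else 0) := by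
  rw [e, e, ι_mul_ι_add_swap]
  congr 1
  rw [QuadraticMap.polar, Qf_apply', Qf_apply', Qf_apply']
  by_cases h : i = j
  · subst h
    simp [Pi.single_apply]
    have h4 : ∑ x : Fin m,
        (((if x = i then (1:ℝ) else 0) + if x = i then 1 else 0) *
          ((if x = i then (1:ℝ) else 0) + if x = i then 1 else 0)) = 4 := by
      have h5 : ∀ x : Fin m,
          (((if x = i then (1:ℝ) else 0) + if x = i then 1 else 0) *
            ((if x = i then (1:ℝ) else 0) + if x = i then 1 else 0))
            = if x = i then (4:ℝ) else 0 := fun x => by split <;> norm_num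
      rw [Finset.sum_congr rfl fun x _ => h5 x]
      simp
    rw [h4]; norm_num
  · simp [h, Pi.single_apply, add_mul, mul_add, Finset.sum_add_distrib, ← ite_and,
      Finset.sum_ite_eq', Finset.sum_ite_eq, Ne.symm h]

lemma alg_left (m : ℕ) (u : Fin m → Fin m → CliffordAlgebra (Qf m))
    (hu : ∀ i j, u i j = u j i) :
    ∑ j, ∑ i, u i j * e m i * e m j = -∑ i, u i i := by
  set S := ∑ j, ∑ i, u i j * e m i * e m j with hS
  have hswap : (∑ j, ∑ i, u i j * e m j * e m i) = S := by
    rw [Finset.sum_comm]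
    exact Finset.sum_congr rfl fun j _ => Finset.sum_congr rfl fun i _ => by rw [hu]
  have h2 : S + S = ∑ j, ∑ i, u i j * (e m i * e m j + e m j * e m i) := by
    simp only [mul_add, ← mul_assoc, Finset.sum_add_distrib, hswap, hS]
  have h3 : S + S = (-2 : ℝ) • ∑ i, u i i := by
    rw [h2]
    have : ∀ j, ∑ i, u i j * (e m i * e m j + e m j * e m i)
        = ∑ i, if i = j then (-2 : ℝ) • u i j else 0 := by
      intro j
      refine Finset.sum_congr rfl fun i _ => ?_
      rw [e_mul_e_add]
      split
      · simp [Algebra.smul_def, Algebra.commutes]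
      · simp
    rw [Finset.sum_congr rfl fun j _ => this j]
    simp [Finset.sum_ite_eq', Finset.smul_sum]
  have h4 : (2 : ℝ) • S = (2 : ℝ) • (-∑ i, u i i) := by
    rw [two_smul]; rw [h3]; simp
  exact smul_right_injective _ (two_ne_zero) h4

lemma alg_right (m : ℕ) (u : Fin m → Fin m → CliffordAlgebra (Qf m))
    (hu : ∀ i j, u i j = u j i) :
    ∑ j, ∑ i, e m j * (e m i * u i j) = -∑ i, u i i := by
  set S := ∑ j, ∑ i, e m j * (e m i * u i j) with hS
  have hswap : (∑ j, ∑ i, e m i * (e m j * u i j)) = S := by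
    rw [Finset.sum_comm]
    exact Finset.sum_congr rfl fun j _ => Finset.sum_congr rfl fun i _ => by rw [hu]
  have h2 : S + S = ∑ j, ∑ i, (e m j * e m i + e m i * e m j) * u i j := by
    simp only [add_mul, mul_assoc, Finset.sum_add_distrib, hswap, hS]
  have h3 : S + S = (-2 : ℝ) • ∑ i, u i i := by
    rw [h2]
    have : ∀ j, ∑ i, (e m j * e m i + e m i * e m j) * u i j
        = ∑ i, if i = j then (-2 : ℝ) • u i j else 0 := by
      intro j
      refine Finset.sum_congr rfl fun i _ => ?_
      rw [e_mul_e_add]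
      split
      · rename_i h; rw [if_pos h.symm]
        simp [Algebra.smul_def]
      · rename_i h; rw [if_neg (Ne.symm h)]
        simp
    rw [Finset.sum_congr rfl fun j _ => this j]
    simp [Finset.sum_ite_eq', Finset.smul_sum]
  have h4 : (2 : ℝ) • S = (2 : ℝ) • (-∑ i, u i i) := by
    rw [two_smul]; rw [h3]; simp
  exact smul_right_injective _ (two_ne_zero) h4

variable {m}

lemma pd_comp_linear (T : CliffordAlgebra (Qf m) →ₗ[ℝ] CliffordAlgebra (Qf m))
    (g : (Fin m → ℝ) → CliffordAlgebra (Qf m)) (i : Fin m) (x : Fin m → ℝ)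
    (hg : DifferentiableAt ℝ (fun y => coordEquiv m (g y)) x) :
    pd m (fun y => T (g y)) i x = T (pd m g i x) := by
  set L := LinearMap.toContinuousLinearMap
    (((coordEquiv m).toLinearMap.comp T).comp (coordEquiv m).symm.toLinearMap) with hL
  have h1 : (fun y => coordEquiv m (T (g y))) = L ∘ (fun y => coordEquiv m (g y)) := by
    funext y; simp [hL]
  have h2 : fderiv ℝ (fun y => coordEquiv m (T (g y))) x
      = L.comp (fderiv ℝ (fun y => coordEquiv m (g y)) x) := by
    rw [h1, fderiv_comp x L.differentiableAt hg, L.fderiv]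
  unfold pd
  rw [h2]
  simp [hL]

lemma diffAt_comp_linear (T : CliffordAlgebra (Qf m) →ₗ[ℝ] CliffordAlgebra (Qf m))
    (g : (Fin m → ℝ) → CliffordAlgebra (Qf m)) (x : Fin m → ℝ)
    (hg : DifferentiableAt ℝ (fun y => coordEquiv m (g y)) x) :
    DifferentiableAt ℝ (fun y => coordEquiv m (T (g y))) x := by
  set L := LinearMap.toContinuousLinearMap
    (((coordEquiv m).toLinearMap.comp T).comp (coordEquiv m).symm.toLinearMap) with hL
  have h1 : (fun y => coordEquiv m (T (g y))) = L ∘ (fun y => coordEquiv m (g y)) := by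
    funext y; simp [hL]
  rw [h1]
  exact L.differentiable.differentiableAt.comp x hg

lemma pd_smul_add (a b : ℝ) (g h : (Fin m → ℝ) → CliffordAlgebra (Qf m)) (j : Fin m)
    (x : Fin m → ℝ)
    (hg : DifferentiableAt ℝ (fun y => coordEquiv m (g y)) x)
    (hh : DifferentiableAt ℝ (fun y => coordEquiv m (h y)) x) :
    pd m (fun y => a • g y + b • h y) j x = a • pd m g j x + b • pd m h j x := by
  unfold pd
  have h1 : (fun y => coordEquiv m (a • g y + b • h y))
      = fun y => a • (coordEquiv m (g y)) + b • (coordEquiv m (h y)) := by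
    funext y; simp
  rw [h1, fderiv_fun_add (f := fun y => a • coordEquiv m (g y)) (g := fun y => b • coordEquiv m (h y))
    (hg.const_smul a) (hh.const_smul b), fderiv_fun_const_smul hg a,
    fderiv_fun_const_smul hh b]
  simp

lemma pd_sum {ι : Type*} (s : Finset ι) (g : ι → (Fin m → ℝ) → CliffordAlgebra (Qf m))
    (j : Fin m) (x : Fin m → ℝ)
    (hg : ∀ i ∈ s, DifferentiableAt ℝ (fun y => coordEquiv m (g i y)) x) :
    pd m (fun y => ∑ i ∈ s, g i y) j x = ∑ i ∈ s, pd m (g i) j x := by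
  unfold pd
  have h1 : (fun y => coordEquiv m (∑ i ∈ s, g i y))
      = fun y => ∑ i ∈ s, coordEquiv m (g i y) := by
    funext y; simp
  rw [h1, fderiv_fun_sum hg]
  simp

lemma coord_pd (f : (Fin m → ℝ) → CliffordAlgebra (Qf m)) (i : Fin m) :
    (fun y => coordEquiv m (pd m f i y))
      = fun y => fderiv ℝ (fun z => coordEquiv m (f z)) y (Pi.single i 1) := by
  funext y; simp [pd]

lemma coord_pd_contDiffOn {Ω : Set (Fin m → ℝ)} (hΩ : IsOpen Ω)
    {f : (Fin m → ℝ) → CliffordAlgebra (Qf m)}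
    (hf : ContDiffOn ℝ 3 (fun y => coordEquiv m (f y)) Ω) (i : Fin m) :
    ContDiffOn ℝ 2 (fun y => coordEquiv m (pd m f i y)) Ω := by
  rw [coord_pd]
  exact (hf.fderiv_of_isOpen hΩ (by norm_num)).clm_apply contDiffOn_const

lemma pd_pd_symm {Ω : Set (Fin m → ℝ)} (hΩ : IsOpen Ω)
    {f : (Fin m → ℝ) → CliffordAlgebra (Qf m)}
    (hf : ContDiffOn ℝ 3 (fun y => coordEquiv m (f y)) Ω)
    {x : Fin m → ℝ} (hx : x ∈ Ω) (i j : Fin m) :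
    pd m (pd m f i) j x = pd m (pd m f j) i x := by
  set F := fun y => coordEquiv m (f y) with hF
  have hF' : DifferentiableAt ℝ (fderiv ℝ F) x :=
    ((hf.fderiv_of_isOpen (m := 2) hΩ (by norm_num)).contDiffAt (hΩ.mem_nhds hx)).differentiableAt
      two_ne_zero
  have hsecond : ∀ v w, fderiv ℝ (fun y => fderiv ℝ F y v) x w
      = fderiv ℝ (fderiv ℝ F) x w v := by
    intro v w
    rw [show (fun y => fderiv ℝ F y v)
        = (ContinuousLinearMap.apply ℝ _ v) ∘ (fderiv ℝ F) from rfl,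
      fderiv_comp x (ContinuousLinearMap.apply ℝ _ v).differentiableAt hF']
    simp
  have hs : IsSymmSndFDerivAt ℝ F x :=
    (hf.contDiffAt (hΩ.mem_nhds hx)).isSymmSndFDerivAt (by norm_num)
  show (coordEquiv m).symm (fderiv ℝ (fun y => coordEquiv m (pd m f i y)) x (Pi.single j 1))
      = (coordEquiv m).symm (fderiv ℝ (fun y => coordEquiv m (pd m f j y)) x (Pi.single i 1))
  rw [coord_pd, coord_pd, ← hF, hsecond, hsecond, hs]

/-- Let `μ > 0`, `λ > -2μ/3`. If `f : Ω → R_{0,m}` is `C³` on an open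
set `Ω ⊆ ℝ^m` and satisfies the Lamé-Navier equation there, then
`M̄ f = ((μ+λ)/2)·Df + ((3μ+λ)/2)·fD` is right monogenic on `Ω`: `(M̄ f)D = 0`. -/
theorem stmt_13 (m : ℕ) [Module.Finite ℝ (CliffordAlgebra (Qf m))] (mu lam : ℝ)
    (hmu : 0 < mu) (hlam : -(2 * mu) / 3 < lam)
    (Ω : Set (Fin m → ℝ)) (hΩ : IsOpen Ω)
    (f : (Fin m → ℝ) → CliffordAlgebra (Qf m))
    (hf : ContDiffOn ℝ 3 (fun y => coordEquiv m (f y)) Ω)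
    (hLN : ∀ x ∈ Ω, LN m mu lam f x = 0) :
    ∀ x ∈ Ω, diracR m (Mbar m mu lam f) x = 0 := by
  intro x hx
  set a := (mu + lam) / 2 with ha
  set b := (3 * mu + lam) / 2 with hb
  have hpdAt : ∀ i, DifferentiableAt ℝ (fun y => coordEquiv m (pd m f i y)) x := fun i =>
    ((coord_pd_contDiffOn hΩ hf i).contDiffAt (hΩ.mem_nhds hx)).differentiableAt two_ne_zero
  have husymm : ∀ i j, pd m (pd m f i) j x = pd m (pd m f j) i x := fun i j =>
    pd_pd_symm hΩ hf hx i j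
  have hDLfun : diracL m f = fun y => ∑ i, (LinearMap.mulLeft ℝ (e m i)) (pd m f i y) := rfl
  have hDRfun : diracR m f = fun y => ∑ i, (LinearMap.mulRight ℝ (e m i)) (pd m f i y) := rfl
  have hDL : ∀ j, pd m (diracL m f) j x = ∑ i, e m i * pd m (pd m f i) j x := by
    intro j
    rw [hDLfun, pd_sum Finset.univ _ j x (fun i _ => diffAt_comp_linear _ _ x (hpdAt i))]
    refine Finset.sum_congr rfl fun i _ => ?_
    rw [pd_comp_linear _ _ j x (hpdAt i), LinearMap.mulLeft_apply]
  have hDR : ∀ j, pd m (diracR m f) j x = ∑ i, pd m (pd m f i) j x * e m i := by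
    intro j
    rw [hDRfun, pd_sum Finset.univ _ j x (fun i _ => diffAt_comp_linear _ _ x (hpdAt i))]
    refine Finset.sum_congr rfl fun i _ => ?_
    rw [pd_comp_linear _ _ j x (hpdAt i), LinearMap.mulRight_apply]
  have hDLAt : DifferentiableAt ℝ (fun y => coordEquiv m (diracL m f y)) x := by
    have h1 : (fun y => coordEquiv m (diracL m f y))
        = fun y => ∑ i, coordEquiv m ((LinearMap.mulLeft ℝ (e m i)) (pd m f i y)) := by
      funext y; rw [hDLfun]; simp
    rw [h1]
    exact DifferentiableAt.fun_sum fun i _ => diffAt_comp_linear _ _ x (hpdAt i)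
  have hDRAt : DifferentiableAt ℝ (fun y => coordEquiv m (diracR m f y)) x := by
    have h1 : (fun y => coordEquiv m (diracR m f y))
        = fun y => ∑ i, coordEquiv m ((LinearMap.mulRight ℝ (e m i)) (pd m f i y)) := by
      funext y; rw [hDRfun]; simp
    rw [h1]
    exact DifferentiableAt.fun_sum fun i _ => diffAt_comp_linear _ _ x (hpdAt i)
  have hMbfun : Mbar m mu lam f = fun y => a • diracL m f y + b • diracR m f y := rfl
  have hMb : ∀ j, pd m (Mbar m mu lam f) j x
      = a • pd m (diracL m f) j x + b • pd m (diracR m f) j x := by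
    intro j
    rw [hMbfun]
    exact pd_smul_add a b _ _ j x hDLAt hDRAt
  have e1 : diracR m (Mbar m mu lam f) x
      = a • (∑ j, (∑ i, e m i * pd m (pd m f i) j x) * e m j)
        + b • (-∑ i, pd m (pd m f i) i x) := by
    have halg := alg_left m (fun i j => pd m (pd m f i) j x) husymm
    show (∑ j, pd m (Mbar m mu lam f) j x * e m j) = _
    calc ∑ j, pd m (Mbar m mu lam f) j x * e m j
        = ∑ j, (a • ((∑ i, e m i * pd m (pd m f i) j x) * e m j)
            + b • ∑ i, pd m (pd m f i) j x * e m i * e m j) := by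
          refine Finset.sum_congr rfl fun j _ => ?_
          rw [hMb j, hDL j, hDR j, add_mul, smul_mul_assoc, smul_mul_assoc]
          simp only [Finset.sum_mul]
      _ = a • (∑ j, (∑ i, e m i * pd m (pd m f i) j x) * e m j)
            + b • ∑ j, ∑ i, pd m (pd m f i) j x * e m i * e m j := by
          rw [Finset.sum_add_distrib, ← Finset.smul_sum, ← Finset.smul_sum]
      _ = _ := by rw [halg]
  have e2 : LN m mu lam f x
      = a • (∑ j, (∑ i, e m i * pd m (pd m f i) j x) * e m j)
        + b • (-∑ i, pd m (pd m f i) i x) := by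
    have halg := alg_right m (fun i j => pd m (pd m f i) j x) husymm
    show a • diracR m (diracL m f) x + b • diracL m (diracL m f) x = _
    congr 1
    · congr 1
      show ∑ j, pd m (diracL m f) j x * e m j = _
      exact Finset.sum_congr rfl fun j _ => by rw [hDL j]
    · congr 1
      show ∑ j, e m j * pd m (diracL m f) j x = _
      calc ∑ j, e m j * pd m (diracL m f) j x
          = ∑ j, ∑ i, e m j * (e m i * pd m (pd m f i) j x) := by
            refine Finset.sum_congr rfl fun j _ => ?_
            rw [hDL j, Finset.mul_sum]
        _ = _ := halg
  rw [e1, ← e2]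
  exact hLN x hx

end
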